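/- (q,ω-integration by parts) Let f,g : I → ℝ be q,ω-differentiable on I and let a,b ∈ I. If the function t ↦ D_{q,ω}[f](t)·g(qt+ω) is q,ω-integrable on [a,b], then so is t ↦ f(t)·D_{q,ω}[g](t), and ∫_a^b f(t)·D_{q,ω}[g](t) d_{q,ω}t = f(b)g(b) − f(a)g(a) − ∫_a^b D_{q,ω}[f](t)·g(qt+ω) d_{q,ω}t. -/

import Mathlib

/-! The Hahn product rule `D(fg)(t) = f(t) D g(t) + D f(t) g(qt + ω)` reduces the statement to the
fundamental theorem `∫_{ω₀}^x D h = h(x) - h(ω₀)` for `h = fg`. Since `t ↦ qt + ω` is the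
contraction `t ↦ ω₀ + q (t - ω₀)`, the Jackson–Nörlund series of `D h` at `x` telescopes along the
orbit `ω₀ + q^k (x - ω₀)`; it converges absolutely because `h` is differentiable at `ω₀`, where
the orbit accumulates geometrically. -/

noncomputable section

namespace Hahn

/-- The fixed point `ω₀ = ω/(1-q)` of `t ↦ qt+ω`. -/
def omega0 (q ω : ℝ) : ℝ := ω / (1 - q)

/-- The Hahn difference operator of `f` (viewed as a function on the interval `I`):
for `t ≠ ω₀` it is `(f(qt+ω) - f(t))/((q-1)t+ω)`, and at `ω₀` it is the derivative of `f`
at `ω₀` (within `I`). -/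
def hahnD (q ω : ℝ) (I : Set ℝ) (f : ℝ → ℝ) (t : ℝ) : ℝ :=
  if t = omega0 q ω then derivWithin f I t
  else (f (q * t + ω) - f t) / ((q - 1) * t + ω)

/-- `f` is `q,ω`-differentiable on `I`: the only nontrivial requirement is
differentiability at `ω₀` (for `t ≠ ω₀` the Hahn quotient always exists). -/
def HahnDiffOn (q ω : ℝ) (I : Set ℝ) (f : ℝ → ℝ) : Prop :=
  DifferentiableWithinAt ℝ f I (omega0 q ω)

/-- The `q`-bracket `[k]_q = (1-q^k)/(1-q)`. -/
def qnum (q : ℝ) (k : ℕ) : ℝ := (1 - q ^ k) / (1 - q)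

/-- The `k`-th term of the Jackson–Nörlund series of `f` at `x`. -/
def jnTerm (q ω : ℝ) (f : ℝ → ℝ) (x : ℝ) (k : ℕ) : ℝ :=
  q ^ k * f (q ^ k * x + ω * qnum q k)

/-- The Jackson–Nörlund series of `f` converges at `x`. -/
def JNSummable (q ω : ℝ) (f : ℝ → ℝ) (x : ℝ) : Prop :=
  Summable (jnTerm q ω f x)

/-- The Jackson–Nörlund integral `∫_{ω₀}^x f(t) d_{q,ω}t`. -/
def jnInt0 (q ω : ℝ) (f : ℝ → ℝ) (x : ℝ) : ℝ :=
  (x * (1 - q) - ω) * ∑' k : ℕ, jnTerm q ω f x k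

/-- The Jackson–Nörlund integral `∫_a^b f(t) d_{q,ω}t`. -/
def jnInt (q ω : ℝ) (f : ℝ → ℝ) (a b : ℝ) : ℝ :=
  jnInt0 q ω f b - jnInt0 q ω f a

/-- `f` is `q,ω`-integrable on `[a,b]`. -/
def JNIntegrable (q ω : ℝ) (f : ℝ → ℝ) (a b : ℝ) : Prop :=
  JNSummable q ω f a ∧ JNSummable q ω f b

/-- The set `[s]_{q,ω} = {q^n s + ω[n]_q : n ∈ ℕ} ∪ {ω₀}`. -/
def qwOrbit (q ω s : ℝ) : Set ℝ :=
  {x | ∃ n : ℕ, x = q ^ n * s + ω * qnum q n} ∪ {omega0 q ω}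

/-- The `q,ω`-interval `[a,b]_{q,ω}`. -/
def qwInterval (q ω a b : ℝ) : Set ℝ :=
  qwOrbit q ω a ∪ qwOrbit q ω b


open Filter Asymptotics Topology

section Telescope

variable {E : Type*} [NormedAddCommGroup E] [NormedSpace ℝ E] [CompleteSpace E]

/-- Near `w`, `h (u k) = h w + (u k - w) • h'(w) + o(r ^ k)`, so the telescoping series converges
absolutely. -/
theorem hasSum_sub_of_differentiableWithinAt {h : ℝ → E} {s : Set ℝ} {w : ℝ}
    (hh : DifferentiableWithinAt ℝ h s w) {u : ℕ → ℝ} (hus : ∀ k, u k ∈ s) {r : ℝ}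
    (hr0 : 0 ≤ r) (hr1 : r < 1) (hO : (fun k => u k - w) =O[atTop] (r ^ ·)) :
    HasSum (fun k => h (u (k + 1)) - h (u k)) (h w - h (u 0)) := by
  have hgeom : Summable (r ^ · : ℕ → ℝ) := summable_geometric_of_lt_one hr0 hr1
  have hu : Tendsto u atTop (𝓝[s] w) := by
    refine tendsto_nhdsWithin_iff.2 ⟨?_, Eventually.of_forall hus⟩
    exact tendsto_sub_nhds_zero_iff.1
      (hO.trans_tendsto (tendsto_pow_atTop_nhds_zero_of_lt_one hr0 hr1))
  set d := derivWithin h s w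
  set φ : ℝ → E := fun t => h t - h w - (t - w) • d
  have hφ : Summable (fun k => φ (u k)) :=
    summable_of_isBigO_nat hgeom <|
      ((hasDerivWithinAt_iff_isLittleO.1 hh.hasDerivWithinAt).comp_tendsto hu).isBigO.trans hO
  have hlin : Summable (fun k => (u (k + 1) - w) • d - (u k - w) • d) :=
    ((summable_nat_add_iff 1).2 (summable_of_isBigO_nat hgeom hO)).smul_const d
      |>.sub ((summable_of_isBigO_nat hgeom hO).smul_const d)
  have hsum : Summable (fun k => h (u (k + 1)) - h (u k)) := by
    convert ((summable_nat_add_iff 1).2 hφ).sub hφ |>.add hlin using 2 with k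
    simp only [φ]
    abel
  refine hsum.hasSum_iff_tendsto_nat.2 ?_
  simp only [Finset.sum_range_sub (fun k => h (u k))]
  exact (hh.continuousWithinAt.tendsto.comp hu).sub_const _

end Telescope

variable {q ω : ℝ}

theorem mul_add_eq_omega0_add (hq1 : q ≠ 1) (t : ℝ) :
    q * t + ω = omega0 q ω + q * (t - omega0 q ω) := by
  have : (1 : ℝ) - q ≠ 0 := sub_ne_zero.2 hq1.symm
  simp only [omega0]
  field_simp
  ring

theorem sub_one_mul_add_eq (hq1 : q ≠ 1) (t : ℝ) :
    (q - 1) * t + ω = (q - 1) * (t - omega0 q ω) := by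
  linear_combination mul_add_eq_omega0_add (ω := ω) hq1 t

theorem mul_one_sub_sub_eq (hq1 : q ≠ 1) (x : ℝ) :
    x * (1 - q) - ω = (1 - q) * (x - omega0 q ω) := by
  linear_combination (-1 : ℝ) * sub_one_mul_add_eq (ω := ω) hq1 x

theorem pow_mul_add_mul_qnum (hq1 : q ≠ 1) (x : ℝ) (k : ℕ) :
    q ^ k * x + ω * qnum q k = omega0 q ω + q ^ k * (x - omega0 q ω) := by
  have : (1 : ℝ) - q ≠ 0 := sub_ne_zero.2 hq1.symm
  simp only [qnum, omega0]
  field_simp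
  ring

theorem omega0_add_pow_mul_mem (hq : 0 < q) (hq1 : q < 1) {I : Set ℝ} (hI : I.OrdConnected)
    (hmem : omega0 q ω ∈ I) {x : ℝ} (hx : x ∈ I) (k : ℕ) :
    omega0 q ω + q ^ k * (x - omega0 q ω) ∈ I :=
  hI.convex.add_smul_sub_mem hmem hx ⟨pow_nonneg hq.le k, pow_le_one₀ hq.le hq1.le⟩

section Linearity

variable {F G : ℝ → ℝ} {x : ℝ}

theorem jnTerm_sub : jnTerm q ω (fun t => F t - G t) x = jnTerm q ω F x - jnTerm q ω G x := by
  ext k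
  simp only [jnTerm, Pi.sub_apply, mul_sub]

theorem JNSummable.sub (hF : JNSummable q ω F x) (hG : JNSummable q ω G x) :
    JNSummable q ω (fun t => F t - G t) x := by
  unfold JNSummable
  rw [jnTerm_sub]
  exact Summable.sub hF hG

theorem jnInt0_sub (hF : JNSummable q ω F x) (hG : JNSummable q ω G x) :
    jnInt0 q ω (fun t => F t - G t) x = jnInt0 q ω F x - jnInt0 q ω G x := by
  simp only [jnInt0, jnTerm_sub, Pi.sub_apply, hF.tsum_sub hG, mul_sub]

end Linearity

theorem hahnD_mul (hq1 : q ≠ 1) {I : Set ℝ} {f g : ℝ → ℝ} (hf : HahnDiffOn q ω I f)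
    (hg : HahnDiffOn q ω I g) (t : ℝ) :
    hahnD q ω I (fun t => f t * g t) t = f t * hahnD q ω I g t + hahnD q ω I f t * g (q * t + ω) := by
  unfold hahnD
  split_ifs with ht
  · subst ht
    rw [mul_add_eq_omega0_add hq1, sub_self, mul_zero, add_zero]
    exact (derivWithin_mul hf hg).trans (by ring)
  · ring

theorem jnInt0_hahnD (hq : 0 < q) (hq1 : q < 1) {I : Set ℝ} (hI : I.OrdConnected)
    (hmem : omega0 q ω ∈ I) {h : ℝ → ℝ} (hh : HahnDiffOn q ω I h) {x : ℝ} (hx : x ∈ I) :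
    JNSummable q ω (hahnD q ω I h) x ∧ jnInt0 q ω (hahnD q ω I h) x = h x - h (omega0 q ω) := by
  have hq1' : q ≠ 1 := hq1.ne
  by_cases hxw : x = omega0 q ω
  · have hterm : jnTerm q ω (hahnD q ω I h) x = fun k => hahnD q ω I h x * q ^ k := by
      ext k
      rw [jnTerm, pow_mul_add_mul_qnum hq1', ← hxw, sub_self, mul_zero, add_zero, mul_comm]
    refine ⟨by rw [JNSummable, hterm]; exact (summable_geometric_of_lt_one hq.le hq1).mul_left _,
      ?_⟩
    rw [jnInt0, mul_one_sub_sub_eq hq1', hxw, sub_self, mul_zero, zero_mul, sub_self]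
  · set u : ℕ → ℝ := fun k => omega0 q ω + q ^ k * (x - omega0 q ω)
    have hterm (k : ℕ) : jnTerm q ω (hahnD q ω I h) x k =
        (h (u (k + 1)) - h (u k)) / ((q - 1) * (x - omega0 q ω)) := by
      have huw : u k ≠ omega0 q ω := by
        simpa [u] using mul_ne_zero (pow_ne_zero k hq.ne') (sub_ne_zero.2 hxw)
      have hσ : q * u k + ω = u (k + 1) := by
        rw [mul_add_eq_omega0_add hq1']
        simp only [u]
        ring
      rw [jnTerm, pow_mul_add_mul_qnum hq1', hahnD, if_neg huw, hσ, sub_one_mul_add_eq hq1']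
      simp only [u, add_sub_cancel_left]
      field_simp [pow_ne_zero k hq.ne']
    have hO : (fun k => u k - omega0 q ω) =O[atTop] (q ^ · : ℕ → ℝ) :=
      (isBigO_const_mul_self (x - omega0 q ω) _ _).congr_left fun k => by simp only [u]; ring
    have hsum : HasSum (jnTerm q ω (hahnD q ω I h) x)
        ((h (omega0 q ω) - h x) / ((q - 1) * (x - omega0 q ω))) := by
      have hu0 : u 0 = x := by simp [u]
      rw [funext hterm]
      simpa only [hu0] using (hasSum_sub_of_differentiableWithinAt (u := u) hh
        (omega0_add_pow_mul_mem hq hq1 hI hmem hx) hq.le hq1 hO).div_const _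
    refine ⟨hsum.summable, ?_⟩
    rw [jnInt0, hsum.tsum_eq, mul_one_sub_sub_eq hq1']
    field_simp
    ring

theorem integration_by_parts_general
    (q ω : ℝ) (hq : 0 < q) (hq1 : q < 1)
    (I : Set ℝ) (hI : I.OrdConnected) (hmem : omega0 q ω ∈ I)
    (f g : ℝ → ℝ) (hf : HahnDiffOn q ω I f) (hg : HahnDiffOn q ω I g)
    (a b : ℝ) (ha : a ∈ I) (hb : b ∈ I)
    (hint : JNIntegrable q ω (fun t => hahnD q ω I f t * g (q * t + ω)) a b) :
    JNIntegrable q ω (fun t => f t * hahnD q ω I g t) a b ∧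
      jnInt q ω (fun t => f t * hahnD q ω I g t) a b =
        f b * g b - f a * g a -
          jnInt q ω (fun t => hahnD q ω I f t * g (q * t + ω)) a b := by
  have hprod : (fun t => f t * hahnD q ω I g t) =
      fun t => hahnD q ω I (fun t => f t * g t) t - hahnD q ω I f t * g (q * t + ω) := by
    ext t
    rw [hahnD_mul hq1.ne hf hg]
    ring
  have hfg : HahnDiffOn q ω I (fun t => f t * g t) := hf.mul hg
  obtain ⟨hsa, hia⟩ := jnInt0_hahnD hq hq1 hI hmem hfg ha
  obtain ⟨hsb, hib⟩ := jnInt0_hahnD hq hq1 hI hmem hfg hb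
  rw [hprod]
  refine ⟨⟨hsa.sub hint.1, hsb.sub hint.2⟩, ?_⟩
  rw [jnInt, jnInt0_sub hsa hint.1, jnInt0_sub hsb hint.2, hia, hib, jnInt]
  ring

/-- `q,ω`-integration by parts. -/
theorem integration_by_parts
    (q ω : ℝ) (hq : 0 < q) (hq1 : q < 1) (hω : 0 ≤ ω)
    (I : Set ℝ) (hI : I.OrdConnected) (hmem : omega0 q ω ∈ I)
    (f g : ℝ → ℝ) (hf : HahnDiffOn q ω I f) (hg : HahnDiffOn q ω I g)
    (a b : ℝ) (ha : a ∈ I) (hb : b ∈ I)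
    (hint : JNIntegrable q ω (fun t => hahnD q ω I f t * g (q * t + ω)) a b) :
    JNIntegrable q ω (fun t => f t * hahnD q ω I g t) a b ∧
      jnInt q ω (fun t => f t * hahnD q ω I g t) a b =
        f b * g b - f a * g a -
          jnInt q ω (fun t => hahnD q ω I f t * g (q * t + ω)) a b :=
  integration_by_parts_general q ω hq hq1 I hI hmem f g hf hg a b ha hb hint

end Hahn
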